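/- arXiv:2405.19272 — 5 statements merged into one kernel-verified Lean document; each statement's English description precedes it below -/
import Mathlib

section
/- Let α > 1, let P, Q be probability measures on a measurable space X with P ≪ Q, and let K, K' be Markov kernels from X to a measurable space Y such that for Q-almost every x, K(x) ≪ K'(x). Suppose ∫_X (dP/dQ)^α dQ ≤ exp((α−1)ε₁) and, for Q-almost every x, ∫_Y (dK(x)/dK'(x))^α dK'(x) ≤ exp((α−1)ε₂). Then the composed measures P ⊗ K and Q ⊗ K' on X × Y (defined by (P ⊗ K)(A × B) = ∫_A K(x)(B) dP(x)) satisfy P ⊗ K ≪ Q ⊗ K' and ∫_{X×Y} (d(P ⊗ K)/d(Q ⊗ K'))^α d(Q ⊗ K') ≤ exp((α−1)(ε₁ + ε₂)). -/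
/-!
Write `ρ` for the density of `P ⊗ₘ K` with respect to `Q ⊗ₘ K'` and `q` for the Hölder
conjugate of `α`. Hölder's inequality, applied first in each fibre (`K x` against `K' x`) and then
to `P` against `Q`, gives `∫ h d(P ⊗ₘ K) ≤ (C₁ C₂)^{1/α} (∫ h^q d(Q ⊗ₘ K'))^{1/q}` for every
`h ≥ 0`, where `C₁`, `C₂` are the two assumed bounds. Testing this against
`h = min(ρ, n)^{α-1}` gives `Iₙ ≤ (C₁ C₂)^{1/α} Iₙ^{1/q}` for the finite quantity
`Iₙ = ∫ min(ρ, n)^α d(Q ⊗ₘ K')`, hence `Iₙ ≤ C₁ C₂`, and monotone convergence lets `n → ∞`.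
This duality argument never needs the fibrewise densities `dK(x)/dK'(x)` to be jointly
measurable in `(x, y)`.
-/

open MeasureTheory ProbabilityTheory
open scoped ENNReal

namespace ENNReal

theorem iSup_min_natCast_rpow (a : ℝ≥0∞) {p : ℝ} (hp : 0 < p) :
    ⨆ n : ℕ, min a n ^ p = a ^ p := by
  have hsup : ⨆ n : ℕ, min a n = a := by
    rw [← inf_iSup_eq, iSup_natCast, inf_top_eq]
  calc ⨆ n : ℕ, min a n ^ p = (⨆ n : ℕ, min a n) ^ p :=
        ((orderIsoRpow p hp).map_iSup _).symm
    _ = a ^ p := by rw [hsup]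

theorem rpow_le_mul_rpow_sub_one {a b : ℝ≥0∞} (hab : a ≤ b) (ha : a ≠ ∞) {p : ℝ} (hp : 1 ≤ p) :
    a ^ p ≤ b * a ^ (p - 1) := by
  rcases eq_or_ne a 0 with rfl | ha₀
  · simp [zero_rpow_of_pos (by linarith : 0 < p)]
  calc a ^ p = a ^ (1 + (p - 1)) := by ring_nf
    _ = a * a ^ (p - 1) := by rw [rpow_add _ _ ha₀ ha, rpow_one]
    _ ≤ b * a ^ (p - 1) := by gcongr

theorem le_of_le_rpow_mul_rpow {I c : ℝ≥0∞} {p q : ℝ} (hpq : p.HolderConjugate q) (hI : I ≠ ∞)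
    (h : I ≤ c ^ (1 / p) * I ^ (1 / q)) : I ≤ c := by
  rcases eq_or_ne I 0 with rfl | hI₀
  · exact zero_le
  have hsplit : I = I ^ (1 / p) * I ^ (1 / q) := by
    rw [← rpow_add _ _ hI₀ hI, hpq.one_div_add_one_div, div_one, rpow_one]
  have hcancel : I ^ (1 / p) ≤ c ^ (1 / p) := by
    rwa [← ENNReal.mul_le_mul_iff_left (rpow_pos hI₀.bot_lt hI).ne'
      (rpow_ne_top_of_nonneg hpq.symm.one_div_nonneg hI), ← hsplit]
  exact (rpow_le_rpow_iff hpq.one_div_pos).1 hcancel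

end ENNReal

namespace MeasureTheory

variable {α : Type*} [MeasurableSpace α] {μ ν : Measure α} {p q : ℝ}

theorem lintegral_le_of_lintegral_rnDeriv_rpow_le [μ.HaveLebesgueDecomposition ν] (hμν : μ ≪ ν)
    (hpq : p.HolderConjugate q) {A : ℝ≥0∞} (hA : ∫⁻ x, μ.rnDeriv ν x ^ p ∂ν ≤ A)
    {h : α → ℝ≥0∞} (hh : AEMeasurable h ν) :
    ∫⁻ x, h x ∂μ ≤ A ^ (1 / p) * (∫⁻ x, h x ^ q ∂ν) ^ (1 / q) :=
  calc ∫⁻ x, h x ∂μ = ∫⁻ x, μ.rnDeriv ν x * h x ∂ν := (lintegral_rnDeriv_mul hμν hh).symm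
    _ ≤ (∫⁻ x, μ.rnDeriv ν x ^ p ∂ν) ^ (1 / p) * (∫⁻ x, h x ^ q ∂ν) ^ (1 / q) :=
      ENNReal.lintegral_mul_le_Lp_mul_Lq ν hpq (μ.measurable_rnDeriv ν).aemeasurable hh
    _ ≤ A ^ (1 / p) * (∫⁻ x, h x ^ q ∂ν) ^ (1 / q) := by
      gcongr
      exact hpq.one_div_nonneg

theorem lintegral_rnDeriv_rpow_le_of_forall_lintegral_le [IsFiniteMeasure ν]
    [μ.HaveLebesgueDecomposition ν] (hμν : μ ≪ ν) (hpq : p.HolderConjugate q) {D : ℝ≥0∞}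
    (hD : ∀ h : α → ℝ≥0∞, Measurable h →
      ∫⁻ x, h x ∂μ ≤ D ^ (1 / p) * (∫⁻ x, h x ^ q ∂ν) ^ (1 / q)) :
    ∫⁻ x, μ.rnDeriv ν x ^ p ∂ν ≤ D := by
  set ρ := μ.rnDeriv ν
  have hρ : Measurable ρ := μ.measurable_rnDeriv ν
  -- Truncating `ρ` makes the integral finite, so that it can be cancelled in Hölder's bound.
  have htrunc (n : ℕ) : ∫⁻ x, min (ρ x) n ^ p ∂ν ≤ D := by
    have hfin : ∫⁻ x, min (ρ x) n ^ p ∂ν ≠ ∞ := by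
      refine ne_top_of_le_ne_top (lintegral_const_lt_top (μ := ν)
        (ENNReal.rpow_ne_top_of_nonneg hpq.nonneg (ENNReal.natCast_ne_top n))).ne
        (lintegral_mono fun x => ?_)
      gcongr
      exacts [hpq.nonneg, min_le_right _ _]
    refine ENNReal.le_of_le_rpow_mul_rpow hpq hfin ?_
    calc ∫⁻ x, min (ρ x) n ^ p ∂ν ≤ ∫⁻ x, ρ x * min (ρ x) n ^ (p - 1) ∂ν :=
          lintegral_mono fun x => ENNReal.rpow_le_mul_rpow_sub_one (min_le_left _ _)
            (ne_top_of_le_ne_top (ENNReal.natCast_ne_top n) (min_le_right _ _)) hpq.lt.le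
      _ = ∫⁻ x, min (ρ x) n ^ (p - 1) ∂μ :=
          lintegral_rnDeriv_mul hμν ((hρ.min measurable_const).pow_const _).aemeasurable
      _ ≤ D ^ (1 / p) * (∫⁻ x, (min (ρ x) n ^ (p - 1)) ^ q ∂ν) ^ (1 / q) :=
          hD _ ((hρ.min measurable_const).pow_const _)
      _ = D ^ (1 / p) * (∫⁻ x, min (ρ x) n ^ p ∂ν) ^ (1 / q) := by
          simp_rw [← ENNReal.rpow_mul, hpq.sub_one_mul_conj]
  calc ∫⁻ x, ρ x ^ p ∂ν = ∫⁻ x, ⨆ n : ℕ, min (ρ x) n ^ p ∂ν := by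
        simp_rw [ENNReal.iSup_min_natCast_rpow _ hpq.pos]
    _ = ⨆ n : ℕ, ∫⁻ x, min (ρ x) n ^ p ∂ν :=
        lintegral_iSup (fun n => (hρ.min measurable_const).pow_const _)
          fun m n hmn x => by gcongr; exact hpq.nonneg
    _ ≤ D := iSup_le htrunc

theorem lintegral_compProd_le_of_rnDeriv_rpow_le {β : Type*} [MeasurableSpace β]
    {P Q : Measure α} [SFinite P] [SigmaFinite Q] {K K' : Kernel α β} [IsSFiniteKernel K]
    [IsFiniteKernel K']
    (hPQ : P ≪ Q) (hKK' : ∀ᵐ x ∂Q, K x ≪ K' x) (hpq : p.HolderConjugate q) {A B : ℝ≥0∞}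
    (hA : ∫⁻ x, P.rnDeriv Q x ^ p ∂Q ≤ A)
    (hB : ∀ᵐ x ∂Q, ∫⁻ y, (K x).rnDeriv (K' x) y ^ p ∂(K' x) ≤ B)
    {h : α × β → ℝ≥0∞} (hh : Measurable h) :
    ∫⁻ z, h z ∂(P ⊗ₘ K) ≤ (A * B) ^ (1 / p) * (∫⁻ z, h z ^ q ∂(Q ⊗ₘ K')) ^ (1 / q) := by
  have hq : 0 < q := hpq.symm.pos
  have hfiber : ∀ᵐ x ∂Q, (∫⁻ y, h (x, y) ∂(K x)) ^ q
      ≤ B ^ (q / p) * ∫⁻ y, h (x, y) ^ q ∂(K' x) := by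
    filter_upwards [hKK', hB] with x hx hxB
    calc (∫⁻ y, h (x, y) ∂(K x)) ^ q
        ≤ (B ^ (1 / p) * (∫⁻ y, h (x, y) ^ q ∂(K' x)) ^ (1 / q)) ^ q := by
          gcongr
          exact lintegral_le_of_lintegral_rnDeriv_rpow_le hx hpq hxB
            (hh.comp measurable_prodMk_left).aemeasurable
      _ = B ^ (q / p) * ∫⁻ y, h (x, y) ^ q ∂(K' x) := by
          rw [ENNReal.mul_rpow_of_nonneg _ _ hq.le, ← ENNReal.rpow_mul, ← ENNReal.rpow_mul,
            one_div_mul_cancel hq.ne', ENNReal.rpow_one, one_div_mul_eq_div]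
  calc ∫⁻ z, h z ∂(P ⊗ₘ K) = ∫⁻ x, ∫⁻ y, h (x, y) ∂(K x) ∂P := Measure.lintegral_compProd hh
    _ ≤ A ^ (1 / p) * (∫⁻ x, (∫⁻ y, h (x, y) ∂(K x)) ^ q ∂Q) ^ (1 / q) :=
        lintegral_le_of_lintegral_rnDeriv_rpow_le hPQ hpq hA
          hh.lintegral_kernel_prod_right'.aemeasurable
    _ ≤ A ^ (1 / p) * (∫⁻ x, B ^ (q / p) * ∫⁻ y, h (x, y) ^ q ∂(K' x) ∂Q) ^ (1 / q) := by
        gcongr A ^ (1 / p) * ?_ ^ _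
        exact lintegral_mono_ae hfiber
    _ = (A * B) ^ (1 / p) * (∫⁻ z, h z ^ q ∂(Q ⊗ₘ K')) ^ (1 / q) := by
        rw [lintegral_const_mul _ (hh.pow_const q).lintegral_kernel_prod_right',
          ← Measure.lintegral_compProd (hh.pow_const q),
          ENNReal.mul_rpow_of_nonneg _ _ hpq.one_div_nonneg,
          ENNReal.mul_rpow_of_nonneg _ _ hpq.symm.one_div_nonneg, ← ENNReal.rpow_mul,
          show q / p * (1 / q) = 1 / p by field_simp, mul_assoc]

end MeasureTheory

/-- Adaptive composition of Rényi differential privacy (Proposition B.1, Mironov): if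
`∫ (dP/dQ)^α dQ ≤ e^{(α−1)ε₁}` and, `Q`-a.e., `∫ (dK(x)/dK'(x))^α dK'(x) ≤ e^{(α−1)ε₂}`, then
the composed measures satisfy `P ⊗ K ≪ Q ⊗ K'` and
`∫ (d(P ⊗ K)/d(Q ⊗ K'))^α d(Q ⊗ K') ≤ e^{(α−1)(ε₁+ε₂)}`. -/
theorem renyi_adaptive_composition
    {X Y : Type*} [MeasurableSpace X] [MeasurableSpace Y]
    (α : ℝ) (hα : 1 < α) (ε₁ ε₂ : ℝ)
    (P Q : Measure X) [IsProbabilityMeasure P] [IsProbabilityMeasure Q]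
    (K K' : Kernel X Y) [IsMarkovKernel K] [IsMarkovKernel K']
    (hPQ : P ≪ Q) (hKK' : ∀ᵐ x ∂Q, K x ≪ K' x)
    (hP : ∫⁻ x, P.rnDeriv Q x ^ α ∂Q ≤ ENNReal.ofReal (Real.exp ((α - 1) * ε₁)))
    (hK : ∀ᵐ x ∂Q, ∫⁻ y, (K x).rnDeriv (K' x) y ^ α ∂(K' x)
        ≤ ENNReal.ofReal (Real.exp ((α - 1) * ε₂))) :
    (P ⊗ₘ K) ≪ (Q ⊗ₘ K') ∧
    ∫⁻ z, (P ⊗ₘ K).rnDeriv (Q ⊗ₘ K') z ^ α ∂(Q ⊗ₘ K')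
      ≤ ENNReal.ofReal (Real.exp ((α - 1) * (ε₁ + ε₂))) := by
  have hAC : P ⊗ₘ K ≪ Q ⊗ₘ K' := hPQ.compProd (hKK'.filter_mono hPQ.ae_le)
  have hexp : ENNReal.ofReal (Real.exp ((α - 1) * (ε₁ + ε₂)))
      = ENNReal.ofReal (Real.exp ((α - 1) * ε₁)) * ENNReal.ofReal (Real.exp ((α - 1) * ε₂)) := by
    rw [← ENNReal.ofReal_mul (Real.exp_nonneg _), ← Real.exp_add, mul_add]
  refine ⟨hAC, hexp ▸ ?_⟩
  have hpq := Real.HolderConjugate.conjExponent hα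
  exact lintegral_rnDeriv_rpow_le_of_forall_lintegral_le hAC hpq fun h hh =>
    lintegral_compProd_le_of_rnDeriv_rpow_le hPQ hKK' hpq hP hK hh
end

section
/- Let α > 1, ε ≥ 0, and let P, Q be probability measures on a measurable space with P ≪ Q such that ∫ (dP/dQ)^α dQ ≤ exp((α−1)ε). Then for every δ with 0 < δ < 1 and αδ ≤ 1, and every measurable set S: P(S) ≤ exp( ε + log(1/(αδ))/(α−1) + log(1 − 1/α) ) · Q(S) + δ. -/
/-!
Young's inequality with exponents `α` and `α/(α-1)` gives, for every `c > 0`, the pointwise bound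
`u ≤ c u^α + (1 - 1/α) (α c)^(-1/(α-1))` on `[0, ∞]`. Applied to `u = dP/dQ` and integrated over `S`
against `Q`, it bounds `P S` by the constant times `Q S` plus `c ∫ (dP/dQ)^α dQ ≤ c e^{(α-1)ε}`.
The choice `c = δ e^{(1-α)ε}` makes the second term `δ` and the constant `e^{ε(δ)}`.
-/

open MeasureTheory
open scoped ENNReal

open Real in
theorem Real.le_mul_rpow_add_of_one_lt {α c u : ℝ} (hα : 1 < α) (hc : 0 < c) (hu : 0 ≤ u) :
    u ≤ c * u ^ α + (1 - α⁻¹) * (α * c) ^ (-(α - 1)⁻¹) := by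
  have hα0 : 0 < α := by linarith
  have hαc : 0 < α * c := by positivity
  set t := (α * c) ^ α⁻¹
  have ht : 0 < t := by positivity
  have young := young_inequality_of_nonneg (mul_nonneg ht.le hu) (inv_nonneg.2 ht.le)
    (HolderConjugate.conjExponent hα)
  have hpow : (t * u) ^ α / α = c * u ^ α := by
    rw [mul_rpow ht.le hu, ← rpow_mul hαc.le, inv_mul_cancel₀ hα0.ne', rpow_one]
    field_simp
  have hconj : t⁻¹ ^ α.conjExponent / α.conjExponent = (1 - α⁻¹) * (α * c) ^ (-(α - 1)⁻¹) := by
    rw [inv_rpow ht.le, ← rpow_mul hαc.le, ← rpow_neg hαc.le, conjExponent]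
    field_simp
  calc u = t * u * t⁻¹ := by field_simp
    _ ≤ _ := young
    _ = _ := by rw [hpow, hconj]

theorem ENNReal.le_ofReal_mul_rpow_add_of_one_lt {α c : ℝ} (hα : 1 < α) (hc : 0 < c) (u : ℝ≥0∞) :
    u ≤ ENNReal.ofReal c * u ^ α
      + ENNReal.ofReal ((1 - α⁻¹) * (α * c) ^ (-(α - 1)⁻¹)) := by
  have hα0 : 0 < α := by linarith
  rcases eq_or_ne u ⊤ with rfl | hu
  · rw [ENNReal.top_rpow_of_pos hα0, ENNReal.mul_top (by simpa using hc)]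
    exact le_add_right le_top
  · have hconst : 0 ≤ (1 - α⁻¹) * (α * c) ^ (-(α - 1)⁻¹) :=
      mul_nonneg (sub_nonneg.2 (inv_le_one_of_one_le₀ hα.le)) (by positivity)
    rw [← ENNReal.ofReal_toReal hu, ENNReal.ofReal_rpow_of_nonneg ENNReal.toReal_nonneg hα0.le,
      ← ENNReal.ofReal_mul hc.le, ← ENNReal.ofReal_add (by positivity) hconst]
    exact ENNReal.ofReal_le_ofReal (Real.le_mul_rpow_add_of_one_lt hα hc ENNReal.toReal_nonneg)

theorem setLIntegral_le_ofReal_mul_measure_add_lintegral_rpow {X : Type*} [MeasurableSpace X]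
    {ν : Measure X} {α c : ℝ} (hα : 1 < α) (hc : 0 < c) (f : X → ℝ≥0∞) (s : Set X) :
    ∫⁻ x in s, f x ∂ν ≤ ENNReal.ofReal ((1 - α⁻¹) * (α * c) ^ (-(α - 1)⁻¹)) * ν s
      + ENNReal.ofReal c * ∫⁻ x, f x ^ α ∂ν :=
  calc ∫⁻ x in s, f x ∂ν
      ≤ ∫⁻ x in s, (ENNReal.ofReal ((1 - α⁻¹) * (α * c) ^ (-(α - 1)⁻¹))
          + ENNReal.ofReal c * f x ^ α) ∂ν :=
        lintegral_mono fun x => (ENNReal.le_ofReal_mul_rpow_add_of_one_lt hα hc (f x)).trans_eq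
          (add_comm _ _)
    _ = ENNReal.ofReal ((1 - α⁻¹) * (α * c) ^ (-(α - 1)⁻¹)) * ν s
          + ENNReal.ofReal c * ∫⁻ x in s, f x ^ α ∂ν := by
        rw [lintegral_add_left measurable_const, setLIntegral_const,
          lintegral_const_mul' _ _ ENNReal.ofReal_ne_top]
    _ ≤ _ := by gcongr _ + _ * ?_; exact setLIntegral_le_lintegral s _

theorem one_sub_inv_mul_rpow_eq_exp {α δ ε : ℝ} (hα : 1 < α) (hδ : 0 < δ) :
    (1 - α⁻¹) * (α * (δ * Real.exp ((1 - α) * ε))) ^ (-(α - 1)⁻¹)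
      = Real.exp (ε + Real.log (1 / (α * δ)) / (α - 1) + Real.log (1 - 1 / α)) := by
  have hα0 : 0 < α := by linarith
  have hα1 : 0 < α - 1 := by linarith
  have hαδ : 0 < α * δ := by positivity
  rw [← mul_assoc, Real.mul_rpow hαδ.le (Real.exp_pos _).le, ← Real.exp_mul,
    Real.rpow_def_of_pos hαδ, Real.exp_add, Real.exp_add, one_div, one_div, Real.exp_log (by
      rw [sub_pos]; exact inv_lt_one_of_one_lt₀ hα), Real.log_inv]
  field_simp
  congr 1
  field_simp
  ring

theorem rdp_to_approx_dp_general
    {X : Type*} [MeasurableSpace X]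
    (α : ℝ) (hα : 1 < α) (ε : ℝ)
    (P Q : Measure X) [IsProbabilityMeasure P] [IsProbabilityMeasure Q]
    (hPQ : P ≪ Q)
    (h : ∫⁻ x, P.rnDeriv Q x ^ α ∂Q ≤ ENNReal.ofReal (Real.exp ((α - 1) * ε)))
    (δ : ℝ) (hδ0 : 0 < δ)
    (S : Set X) :
    P S ≤ ENNReal.ofReal
        (Real.exp (ε + Real.log (1 / (α * δ)) / (α - 1) + Real.log (1 - 1 / α))) * Q S
      + ENNReal.ofReal δ := by
  set c := δ * Real.exp ((1 - α) * ε)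
  have hc : 0 < c := by positivity
  have hc_exp : c * Real.exp ((α - 1) * ε) = δ := by
    rw [mul_assoc, ← Real.exp_add, ← add_mul, sub_add_sub_cancel', sub_self, zero_mul,
      Real.exp_zero, mul_one]
  calc P S = ∫⁻ x in S, P.rnDeriv Q x ∂Q := (Measure.setLIntegral_rnDeriv hPQ S).symm
    _ ≤ _ := setLIntegral_le_ofReal_mul_measure_add_lintegral_rpow hα hc _ S
    _ ≤ _ := by
      rw [one_sub_inv_mul_rpow_eq_exp hα hδ0, ← hc_exp, ENNReal.ofReal_mul hc.le]
      gcongr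

/-- Conversion from Rényi DP to approximate DP (Lemma B.2): if
`∫ (dP/dQ)^α dQ ≤ e^{(α−1)ε}` (i.e. `D_α(P‖Q) ≤ ε`), then for every `0 < δ < 1` with
`αδ ≤ 1` and every measurable `S`,
`P(S) ≤ exp(ε + log(1/(αδ))/(α−1) + log(1 − 1/α)) · Q(S) + δ`. -/
theorem rdp_to_approx_dp
    {X : Type*} [MeasurableSpace X]
    (α : ℝ) (hα : 1 < α) (ε : ℝ) (hε : 0 ≤ ε)
    (P Q : Measure X) [IsProbabilityMeasure P] [IsProbabilityMeasure Q]
    (hPQ : P ≪ Q)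
    (h : ∫⁻ x, P.rnDeriv Q x ^ α ∂Q ≤ ENNReal.ofReal (Real.exp ((α - 1) * ε)))
    (δ : ℝ) (hδ0 : 0 < δ) (hδ1 : δ < 1) (hαδ : α * δ ≤ 1)
    (S : Set X) (hS : MeasurableSet S) :
    P S ≤ ENNReal.ofReal
        (Real.exp (ε + Real.log (1 / (α * δ)) / (α - 1) + Real.log (1 - 1 / α))) * Q S
      + ENNReal.ofReal δ :=
  rdp_to_approx_dp_general α hα ε P Q hPQ h δ hδ0 S
end

section
/- Let T ≥ 1 be a natural number, c > 0, σ > 0, and let μ, μ' : {1,…,T} → ℝ satisfy |μ_t − μ'_t| ≤ c for all t. Let P = ⊗_{t=1}^T N(μ_t, σ²) and Q = ⊗_{t=1}^T N(μ'_t, σ²) be the corresponding product Gaussian measures on ℝ^T. Then for every real α > 1, every δ ∈ (0,1), and every measurable set S ⊆ ℝ^T: P(S) ≤ exp( T·α·c²/(2σ²) + log(1/δ)/(α−1) ) · Q(S) + δ. -/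
/-!
The privacy loss `L = log (dP/dQ)` of the two product Gaussians is the sum of the coordinate
losses, each affine in its coordinate. Splitting `S` along `{L ≤ ε}` gives
`P S ≤ e^ε Q S + P {ε < L}`, and Chernoff's bound with exponent `α - 1` bounds the tail by
`e^{-(α-1)ε} 𝔼_P[e^{(α-1)L}]`. This moment factorizes over the coordinates into Gaussian moment
generating functions, `exp ((α-1) α (μ t - μ' t)² / (2σ²))` each (the order-`α` Rényi divergence),
so for `|μ t - μ' t| ≤ c` and the given `ε` the tail is at most `δ`.
-/

open MeasureTheory ProbabilityTheory
open scoped ENNReal NNReal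

namespace MeasureTheory

variable {ι : Type*} [Fintype ι] {E : ι → Type*} [∀ i, MeasurableSpace (E i)]

theorem lintegral_fintype_prod_eq_prod (μ : ∀ i, Measure (E i)) [∀ i, IsProbabilityMeasure (μ i)]
    (f : ∀ i, E i → ℝ≥0∞) (hf : ∀ i, Measurable (f i)) :
    ∫⁻ x, ∏ i, f i (x i) ∂Measure.pi μ = ∏ i, ∫⁻ y, f i y ∂μ i := by
  have hindep := iIndepFun_pi (μ := μ) fun i => (hf i).aemeasurable
  rw [lintegral_prod_eq_prod_lintegral_of_indepFun _ _ hindep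
    fun i => (hf i).comp (measurable_pi_apply i)]
  exact Finset.prod_congr rfl fun i _ => by
    rw [← (measurePreserving_eval μ i).lintegral_comp (hf i)]

theorem Measure.pi_withDensity (μ : ∀ i, Measure (E i)) [∀ i, IsProbabilityMeasure (μ i)]
    (f : ∀ i, E i → ℝ≥0∞) (hf : ∀ i, Measurable (f i))
    [∀ i, SigmaFinite ((μ i).withDensity (f i))] :
    Measure.pi (fun i => (μ i).withDensity (f i)) =
      (Measure.pi μ).withDensity fun x => ∏ i, f i (x i) := by
  refine Measure.pi_eq fun s hs => ?_
  have hbox : (Set.univ.pi s).indicator (fun x => ∏ i, f i (x i)) =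
      fun x => ∏ i, (s i).indicator (f i) (x i) := by
    ext x
    by_cases h : x ∈ Set.univ.pi s
    · rw [Set.indicator_of_mem h]
      exact Finset.prod_congr rfl fun i _ => (Set.indicator_of_mem (h i trivial) _).symm
    · rw [Set.indicator_of_notMem h]
      obtain ⟨i, hi⟩ : ∃ i, x i ∉ s i := by simpa using h
      exact (Finset.prod_eq_zero (Finset.mem_univ i) (by simp [hi])).symm
  rw [withDensity_apply _ (MeasurableSet.univ_pi hs),
    ← lintegral_indicator (MeasurableSet.univ_pi hs), hbox,
    lintegral_fintype_prod_eq_prod μ _ fun i => (hf i).indicator (hs i)]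
  exact Finset.prod_congr rfl fun i _ => by
    rw [lintegral_indicator (hs i), withDensity_apply _ (hs i)]

variable {Ω : Type*} [MeasurableSpace Ω] {P Q : Measure Ω} {L : Ω → ℝ}

theorem measure_le_exp_mul_add_measure_lt [SFinite Q]
    (hPQ : P = Q.withDensity fun x => ENNReal.ofReal (Real.exp (L x))) (ε : ℝ) (S : Set Ω) :
    P S ≤ ENNReal.ofReal (Real.exp ε) * Q S + P {x | ε < L x} := by
  have hgood : P (S ∩ {x | L x ≤ ε}) ≤ ENNReal.ofReal (Real.exp ε) * Q S :=
    calc P (S ∩ {x | L x ≤ ε})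
        ≤ ∫⁻ _ in S ∩ {x | L x ≤ ε}, ENNReal.ofReal (Real.exp ε) ∂Q := by
          rw [hPQ, withDensity_apply']
          exact setLIntegral_mono measurable_const fun x hx =>
            ENNReal.ofReal_le_ofReal (Real.exp_le_exp.2 hx.2)
      _ ≤ ENNReal.ofReal (Real.exp ε) * Q S := by
          rw [setLIntegral_const]
          gcongr
          exact Set.inter_subset_left
  calc P S ≤ P (S ∩ {x | L x ≤ ε}) + P (S \ {x | L x ≤ ε}) := measure_le_inter_add_sdiff _ _ _
    _ ≤ ENNReal.ofReal (Real.exp ε) * Q S + P {x | ε < L x} := by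
        gcongr
        exact fun x hx => show ε < L x from not_le.1 hx.2

theorem measure_lt_le_exp_neg_mul_mul_lintegral_exp (hL : AEMeasurable L P) {l : ℝ} (hl : 0 ≤ l)
    (ε : ℝ) :
    P {x | ε < L x} ≤
      ENNReal.ofReal (Real.exp (-(l * ε))) * ∫⁻ x, ENNReal.ofReal (Real.exp (l * L x)) ∂P := by
  set f := fun x => ENNReal.ofReal (Real.exp (-(l * ε))) * ENNReal.ofReal (Real.exp (l * L x))
  have hsub : {x | ε < L x} ⊆ {x | 1 ≤ f x} := fun x (hx : ε < L x) => by
    change 1 ≤ f x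
    simp only [f, ← ENNReal.ofReal_mul (Real.exp_nonneg _), ← Real.exp_add]
    exact ENNReal.one_le_ofReal.2 (Real.one_le_exp (by nlinarith))
  calc P {x | ε < L x} ≤ 1 * P {x | 1 ≤ f x} := by rw [one_mul]; exact measure_mono hsub
    _ ≤ ∫⁻ x, f x ∂P := mul_meas_ge_le_lintegral₀ (by fun_prop) 1
    _ = _ := lintegral_const_mul' _ _ ENNReal.ofReal_ne_top

end MeasureTheory

namespace ProbabilityTheory

/-- `log (gaussianPDFReal a v x / gaussianPDFReal b v x) = ((x - b)² - (x - a)²) / (2v)`. -/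
noncomputable def gaussianLogLR (a b : ℝ) (v : ℝ≥0) (x : ℝ) : ℝ :=
  (a - b) * (2 * x - a - b) / (2 * v)

variable {v : ℝ≥0}

@[fun_prop]
theorem measurable_gaussianLogLR (a b : ℝ) (v : ℝ≥0) : Measurable (gaussianLogLR a b v) := by
  unfold gaussianLogLR; fun_prop

theorem gaussianPDFReal_eq_mul_exp_gaussianLogLR (hv : v ≠ 0) (a b x : ℝ) :
    gaussianPDFReal a v x = gaussianPDFReal b v x * Real.exp (gaussianLogLR a b v x) := by
  have hv' : (v : ℝ) ≠ 0 := NNReal.coe_ne_zero.2 hv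
  rw [gaussianPDFReal, gaussianPDFReal, gaussianLogLR]
  conv_rhs => rw [mul_assoc, ← Real.exp_add]
  congr 2
  field_simp
  ring

theorem gaussianReal_eq_withDensity_exp_gaussianLogLR (hv : v ≠ 0) (a b : ℝ) :
    gaussianReal a v =
      (gaussianReal b v).withDensity
        fun x => ENNReal.ofReal (Real.exp (gaussianLogLR a b v x)) := by
  rw [gaussianReal_of_var_ne_zero a hv, gaussianReal_of_var_ne_zero b hv,
    ← withDensity_mul _ (measurable_gaussianPDF b v) (by fun_prop)]
  congr 1
  ext x
  rw [Pi.mul_apply, gaussianPDF, gaussianPDF,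
    ← ENNReal.ofReal_mul (gaussianPDFReal_nonneg b v x),
    gaussianPDFReal_eq_mul_exp_gaussianLogLR hv]

theorem lintegral_exp_mul_gaussianLogLR (hv : v ≠ 0) (a b l : ℝ) :
    ∫⁻ x, ENNReal.ofReal (Real.exp (l * gaussianLogLR a b v x)) ∂gaussianReal a v =
      ENNReal.ofReal (Real.exp (l * (l + 1) * (a - b) ^ 2 / (2 * v))) := by
  have hv' : (v : ℝ) ≠ 0 := NNReal.coe_ne_zero.2 hv
  -- `l * gaussianLogLR a b v` is affine, so the integral is a value of the Gaussian mgf.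
  set s := l * (a - b) / v
  set k := -(l * (a - b) * (a + b)) / (2 * v)
  have haffine : ∀ x, l * gaussianLogLR a b v x = k + s * x := fun x => by
    simp only [gaussianLogLR, s, k]; field_simp; ring
  simp_rw [haffine, Real.exp_add]
  rw [← ofReal_integral_eq_lintegral_ofReal
      ((integrable_exp_mul_gaussianReal s).const_mul _) (ae_of_all _ fun x => by positivity),
    integral_const_mul]
  have hmgf : ∫ x, Real.exp (s * x) ∂gaussianReal a v = Real.exp (a * s + v * s ^ 2 / 2) := by
    simpa [mgf] using congrFun (mgf_id_gaussianReal (μ := a) (v := v)) s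
  rw [hmgf, ← Real.exp_add]
  congr 2
  simp only [s, k]
  field_simp
  ring

variable {ι : Type*} [Fintype ι]

theorem pi_gaussianReal_eq_withDensity (hv : v ≠ 0) (a b : ι → ℝ) :
    Measure.pi (fun i => gaussianReal (a i) v) =
      (Measure.pi fun i => gaussianReal (b i) v).withDensity
        fun x => ENNReal.ofReal (Real.exp (∑ i, gaussianLogLR (a i) (b i) v (x i))) := by
  have hfactor := fun i => gaussianReal_eq_withDensity_exp_gaussianLogLR hv (a i) (b i)
  have : ∀ i, SigmaFinite ((gaussianReal (b i) v).withDensity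
      fun x => ENNReal.ofReal (Real.exp (gaussianLogLR (a i) (b i) v x))) := fun i => by
    rw [← hfactor i]; infer_instance
  simp_rw [hfactor, Real.exp_sum, ENNReal.ofReal_prod_of_nonneg fun i _ => Real.exp_nonneg _]
  exact Measure.pi_withDensity _ _ fun i => by fun_prop

theorem lintegral_exp_mul_sum_gaussianLogLR (hv : v ≠ 0) (a b : ι → ℝ) (l : ℝ) :
    ∫⁻ x, ENNReal.ofReal (Real.exp (l * ∑ i, gaussianLogLR (a i) (b i) v (x i)))
        ∂Measure.pi (fun i => gaussianReal (a i) v) =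
      ENNReal.ofReal (Real.exp (∑ i, l * (l + 1) * (a i - b i) ^ 2 / (2 * v))) := by
  simp_rw [Finset.mul_sum, Real.exp_sum,
    ENNReal.ofReal_prod_of_nonneg fun i _ => Real.exp_nonneg _]
  exact (lintegral_fintype_prod_eq_prod _
    (fun i y => ENNReal.ofReal (Real.exp (l * gaussianLogLR (a i) (b i) v y)))
    fun i => by fun_prop).trans
      (Finset.prod_congr rfl fun i _ => lintegral_exp_mul_gaussianLogLR hv _ _ _)

theorem lintegral_exp_mul_sum_gaussianLogLR_le (hv : v ≠ 0) {a b : ι → ℝ} {c l : ℝ} (hl : 0 ≤ l)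
    (hab : ∀ i, |a i - b i| ≤ c) :
    ∫⁻ x, ENNReal.ofReal (Real.exp (l * ∑ i, gaussianLogLR (a i) (b i) v (x i)))
        ∂Measure.pi (fun i => gaussianReal (a i) v) ≤
      ENNReal.ofReal (Real.exp (Fintype.card ι * (l * (l + 1) * c ^ 2 / (2 * v)))) := by
  have hsq : ∀ i, (a i - b i) ^ 2 ≤ c ^ 2 := fun i =>
    sq_abs (a i - b i) ▸ pow_le_pow_left₀ (abs_nonneg _) (hab i) 2
  rw [lintegral_exp_mul_sum_gaussianLogLR hv, ← nsmul_eq_mul, ← Finset.card_univ,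
    ← Finset.sum_const]
  gcongr ENNReal.ofReal (Real.exp ?_)
  exact Finset.sum_le_sum fun i _ =>
    div_le_div_of_nonneg_right (mul_le_mul_of_nonneg_left (hsq i) (by positivity)) (by positivity)

end ProbabilityTheory

theorem dpsgd_composition_dp_general
    (T : ℕ) (c σ : ℝ) (hσ : 0 < σ)
    (μ μ' : Fin T → ℝ) (hμ : ∀ t, |μ t - μ' t| ≤ c)
    (α : ℝ) (hα : 1 < α) (δ : ℝ) (hδ0 : 0 < δ)
    (S : Set (Fin T → ℝ)) :
    Measure.pi (fun t => gaussianReal (μ t) ⟨σ ^ 2, sq_nonneg σ⟩) S ≤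
      ENNReal.ofReal
          (Real.exp (T * α * c ^ 2 / (2 * σ ^ 2) + Real.log (1 / δ) / (α - 1))) *
        Measure.pi (fun t => gaussianReal (μ' t) ⟨σ ^ 2, sq_nonneg σ⟩) S
      + ENNReal.ofReal δ := by
  set v : ℝ≥0 := ⟨σ ^ 2, sq_nonneg σ⟩
  have hv : v ≠ 0 := fun h => (pow_pos hσ 2).ne' (congrArg NNReal.toReal h)
  set ε := T * α * c ^ 2 / (2 * σ ^ 2) + Real.log (1 / δ) / (α - 1)
  set L := fun x : Fin T → ℝ => ∑ t, gaussianLogLR (μ t) (μ' t) v (x t)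
  have hδ : Real.exp (-((α - 1) * ε)) *
      Real.exp (T * ((α - 1) * (α - 1 + 1) * c ^ 2 / (2 * v))) = δ := by
    have : α - 1 ≠ 0 := by linarith
    have hv' : (v : ℝ) = σ ^ 2 := rfl
    rw [← Real.exp_add, ← Real.exp_log hδ0]
    congr 1
    simp only [ε, hv', one_div, Real.log_inv]
    field_simp
    ring
  set P := Measure.pi fun t => gaussianReal (μ t) v
  calc P S ≤ ENNReal.ofReal (Real.exp ε) * _ + P {x | ε < L x} :=
        measure_le_exp_mul_add_measure_lt (pi_gaussianReal_eq_withDensity hv μ μ') ε S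
    _ ≤ ENNReal.ofReal (Real.exp ε) * _ + ENNReal.ofReal (Real.exp (-((α - 1) * ε))) *
          ∫⁻ x, ENNReal.ofReal (Real.exp ((α - 1) * L x)) ∂P := by
        gcongr
        exact measure_lt_le_exp_neg_mul_mul_lintegral_exp (by fun_prop) (by linarith) ε
    _ ≤ _ := by
        grw [lintegral_exp_mul_sum_gaussianLogLR_le hv (by linarith) hμ, Fintype.card_fin,
          ← ENNReal.ofReal_mul (Real.exp_nonneg _), hδ]

/-- Rigorous core of Theorem D.1: composing `T` Gaussian mechanisms with per-step sensitivity
`c` and noise variance `σ²` (product Gaussian measures with means within `c` coordinatewise)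
yields `(ε, δ)`-DP with `ε = T·α·c²/(2σ²) + log(1/δ)/(α−1)`, for every `α > 1` and
`δ ∈ (0,1)`. -/
theorem dpsgd_composition_dp
    (T : ℕ) (hT : 1 ≤ T) (c σ : ℝ) (hc : 0 < c) (hσ : 0 < σ)
    (μ μ' : Fin T → ℝ) (hμ : ∀ t, |μ t - μ' t| ≤ c)
    (α : ℝ) (hα : 1 < α) (δ : ℝ) (hδ0 : 0 < δ) (hδ1 : δ < 1)
    (S : Set (Fin T → ℝ)) (hS : MeasurableSet S) :
    Measure.pi (fun t => gaussianReal (μ t) ⟨σ ^ 2, sq_nonneg σ⟩) S ≤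
      ENNReal.ofReal
          (Real.exp (T * α * c ^ 2 / (2 * σ ^ 2) + Real.log (1 / δ) / (α - 1))) *
        Measure.pi (fun t => gaussianReal (μ' t) ⟨σ ^ 2, sq_nonneg σ⟩) S
      + ENNReal.ofReal δ :=
  dpsgd_composition_dp_general T c σ hσ μ μ' hμ α hα δ hδ0 S
end

section
/- Let 0 < ε ≤ 1, 0 < δ < 1, Δ > 0, and let σ satisfy σ ≥ √(2 ln(1.25/δ)) · Δ / ε. Then for all μ₁, μ₂ ∈ ℝ with |μ₁ − μ₂| ≤ Δ and every measurable set S ⊆ ℝ: N(μ₁, σ²)(S) ≤ e^ε · N(μ₂, σ²)(S) + δ. -/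
/-!
For Gaussian densities with common variance `v`, the likelihood ratio satisfies
`φ_{μ₁}(x) = exp(((x - μ₂)² - (x - μ₁)²) / (2v)) · φ_{μ₂}(x)`, and the exponent is affine in `x`.
Hence `N(μ₁, v)` is at most `e^ε · N(μ₂, v)` outside a half-line `B`, and
`N(μ₁, v)(S) ≤ e^ε N(μ₂, v)(S) + N(μ₁, v)(B)`. After reflecting so that `μ₂ ≤ μ₁` and
standardizing, `B` becomes the tail `(c - ε/(2c), ∞)` of `N(0, 1)`, where
`c = √(2 ln(1.25/δ))`. The tail bound `P(Z > u) ≤ e^{-u²/2}/2` gives at most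
`e^{ε/2} · (δ/1.25)/2 ≤ δ`.
-/

open MeasureTheory ProbabilityTheory Real Set
open scoped NNReal ENNReal

namespace MeasureTheory

lemma restrict_withDensity_le_smul {α : Type*} [MeasurableSpace α] {ν : Measure α}
    {f g : α → ℝ≥0∞} (hg : Measurable g) {s : Set α} (hs : MeasurableSet s) {c : ℝ≥0∞}
    (h : ∀ x ∈ s, f x ≤ c * g x) :
    (ν.withDensity f).restrict s ≤ c • (ν.withDensity g).restrict s := by
  rw [restrict_withDensity hs, restrict_withDensity hs, ← withDensity_smul c hg]
  exact withDensity_mono (ae_restrict_of_forall_mem hs h)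

end MeasureTheory

namespace ProbabilityTheory

lemma gaussianPDFReal_le_exp_mul {μ₁ μ₂ a x : ℝ} {v : ℝ≥0}
    (h : (x - μ₂) ^ 2 - (x - μ₁) ^ 2 ≤ 2 * v * a) :
    gaussianPDFReal μ₁ v x ≤ exp a * gaussianPDFReal μ₂ v x := by
  rcases eq_or_ne v 0 with rfl | hv
  · simp [gaussianPDFReal_zero_var]
  have hv' : (0 : ℝ) < v := by positivity
  rw [gaussianPDFReal, gaussianPDFReal, mul_left_comm, ← exp_add]
  gcongr
  rw [add_div' _ _ _ (by positivity), div_le_div_iff_of_pos_right (by positivity)]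
  linarith

lemma gaussianPDFReal_le_inv_sqrt (μ : ℝ) (v : ℝ≥0) (x : ℝ) :
    gaussianPDFReal μ v x ≤ (√(2 * π * v))⁻¹ := by
  rw [gaussianPDFReal]
  refine mul_le_of_le_one_right (by positivity) (exp_le_one_iff.mpr ?_)
  exact div_nonpos_of_nonpos_of_nonneg (neg_nonpos.mpr (sq_nonneg _)) (by positivity)

lemma gaussianReal_restrict_le_smul {μ₁ μ₂ a : ℝ} {v : ℝ≥0} (hv : v ≠ 0) {s : Set ℝ}
    (hs : MeasurableSet s) (h : ∀ x ∈ s, (x - μ₂) ^ 2 - (x - μ₁) ^ 2 ≤ 2 * v * a) :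
    (gaussianReal μ₁ v).restrict s ≤ ENNReal.ofReal (exp a) • (gaussianReal μ₂ v).restrict s := by
  rw [gaussianReal_of_var_ne_zero _ hv, gaussianReal_of_var_ne_zero _ hv]
  refine restrict_withDensity_le_smul (measurable_gaussianPDF _ _) hs fun x hx => ?_
  rw [gaussianPDF, gaussianPDF, ← ENNReal.ofReal_mul (exp_nonneg a)]
  exact ENNReal.ofReal_le_ofReal (gaussianPDFReal_le_exp_mul (h x hx))

lemma gaussianReal_le_exp_mul_add {μ₁ μ₂ ε : ℝ} {v : ℝ≥0} (hv : v ≠ 0) {B : Set ℝ}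
    (hB : MeasurableSet B) (h : ∀ x ∈ Bᶜ, (x - μ₂) ^ 2 - (x - μ₁) ^ 2 ≤ 2 * v * ε)
    (S : Set ℝ) :
    gaussianReal μ₁ v S ≤ ENNReal.ofReal (exp ε) * gaussianReal μ₂ v S + gaussianReal μ₁ v B := by
  have hBc := gaussianReal_restrict_le_smul hv hB.compl h S
  rw [Measure.smul_apply, smul_eq_mul] at hBc
  calc gaussianReal μ₁ v S
      = (gaussianReal μ₁ v).restrict B S + (gaussianReal μ₁ v).restrict Bᶜ S := by
        rw [← Measure.add_apply, Measure.restrict_add_restrict_compl hB]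
    _ ≤ gaussianReal μ₁ v B + ENNReal.ofReal (exp ε) * gaussianReal μ₂ v S :=
        add_le_add ((measure_mono (subset_univ S)).trans_eq (Measure.restrict_apply_univ B))
          (hBc.trans (by gcongr; exact Measure.restrict_le_self))
    _ = _ := add_comm _ _

lemma gaussianReal_neg_apply (μ : ℝ) (v : ℝ≥0) (s : Set ℝ) :
    gaussianReal (-μ) v (-s) = gaussianReal μ v s := by
  rw [← gaussianReal_map_neg, measurableEmbedding_neg.map_apply, Set.neg_preimage, neg_neg]

lemma gaussianReal_map_sub_div {μ σ : ℝ} {v : ℝ≥0} (hσ : σ ≠ 0) (hv : (v : ℝ) = σ ^ 2) :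
    (gaussianReal μ v).map (fun x => (x - μ) / σ) = gaussianReal 0 1 := by
  rw [show (fun x => (x - μ) / σ) = (· / σ) ∘ (· - μ) from rfl,
    ← Measure.map_map (by fun_prop) (by fun_prop), gaussianReal_map_sub_const,
    gaussianReal_map_div_const, sub_self, zero_div]
  congr
  ext
  simp [hv, hσ]

lemma gaussianReal_le_smul_volume (μ : ℝ) {v : ℝ≥0} (hv : v ≠ 0) :
    gaussianReal μ v ≤ ENNReal.ofReal (√(2 * π * v))⁻¹ • volume := by
  rw [gaussianReal_of_var_ne_zero _ hv, ← withDensity_const]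
  exact withDensity_mono (ae_of_all _ fun x =>
    ENNReal.ofReal_le_ofReal (gaussianPDFReal_le_inv_sqrt μ v x))

lemma gaussianReal_Ioi_self (μ : ℝ) {v : ℝ≥0} (hv : v ≠ 0) :
    gaussianReal μ v (Ioi μ) = 2⁻¹ := by
  have := nullSingletonClass_gaussianReal (μ := μ) hv
  have hsymm : gaussianReal μ v (Iio μ) = gaussianReal μ v (Ioi μ) := by
    have hmap : (gaussianReal μ v).map (2 * μ - ·) = gaussianReal μ v := by
      rw [gaussianReal_map_const_sub]; ring_nf
    conv_lhs => rw [← hmap]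
    rw [Measure.map_apply (by fun_prop) measurableSet_Iio]
    congr 1; ext x; simp only [mem_preimage, mem_Iio, mem_Ioi]; constructor <;> intro <;> linarith
  have hsum : gaussianReal μ v (Iio μ) + gaussianReal μ v (Ioi μ) = 1 := by
    rw [← measure_union Iio_disjoint_Ioi_same measurableSet_Ioi, Iio_union_Ioi,
      prob_compl_eq_one_sub (measurableSet_singleton μ), measure_singleton, tsub_zero]
  rw [hsymm, ← mul_two] at hsum
  exact ENNReal.eq_inv_of_mul_eq_one_left hsum

/- For `t ≥ x ≥ 0` we have `t² ≥ x² + (t - x)²`, so on `(x, ∞)` the density of `N(0, v)` is at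
most `e^{-x²/(2v)}` times that of `N(x, v)`, which gives `(x, ∞)` mass `1/2`. -/
lemma gaussianReal_Ioi_le_exp {v : ℝ≥0} (hv : v ≠ 0) {x : ℝ} (hx : 0 ≤ x) :
    gaussianReal 0 v (Ioi x) ≤ ENNReal.ofReal (exp (-x ^ 2 / (2 * v)) / 2) := by
  have hv' : (0 : ℝ) < v := by positivity
  have hpdf : ∀ t ∈ Ioi x, (t - x) ^ 2 - (t - 0) ^ 2 ≤ 2 * v * (-x ^ 2 / (2 * v)) := by
    intro t ht
    rw [mul_div_cancel₀ _ (by positivity)]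
    nlinarith [mem_Ioi.mp ht]
  calc gaussianReal 0 v (Ioi x) = (gaussianReal 0 v).restrict (Ioi x) (Ioi x) :=
        (Measure.restrict_apply_self _ _).symm
    _ ≤ (ENNReal.ofReal (exp (-x ^ 2 / (2 * v))) • (gaussianReal x v).restrict (Ioi x)) (Ioi x) :=
        gaussianReal_restrict_le_smul hv measurableSet_Ioi hpdf _
    _ = ENNReal.ofReal (exp (-x ^ 2 / (2 * v)) / 2) := by
        rw [Measure.smul_apply, smul_eq_mul, Measure.restrict_apply_self, gaussianReal_Ioi_self x hv,
          ENNReal.ofReal_div_of_pos two_pos, ENNReal.ofReal_ofNat, ENNReal.div_eq_inv_mul, mul_comm]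

lemma gaussianReal_Ioi_le_of_nonpos {v : ℝ≥0} (hv : v ≠ 0) {x : ℝ} (hx : x ≤ 0) :
    gaussianReal 0 v (Ioi x) ≤ ENNReal.ofReal (-x / √(2 * π * v) + 1 / 2) := by
  calc gaussianReal 0 v (Ioi x) ≤ gaussianReal 0 v (Ioc x 0) + gaussianReal 0 v (Ioi 0) := by
        rw [← Ioc_union_Ioi_eq_Ioi hx]; exact measure_union_le _ _
    _ ≤ ENNReal.ofReal (√(2 * π * v))⁻¹ * volume (Ioc x 0) + 2⁻¹ :=
        add_le_add (gaussianReal_le_smul_volume 0 hv _) (gaussianReal_Ioi_self 0 hv).le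
    _ = ENNReal.ofReal (-x / √(2 * π * v) + 1 / 2) := by
        rw [Real.volume_Ioc, zero_sub, ← ENNReal.ofReal_mul (by positivity),
          ENNReal.ofReal_add (by have := neg_nonneg.mpr hx; positivity) (by norm_num),
          one_div, ENNReal.ofReal_inv_of_pos two_pos, ENNReal.ofReal_ofNat, inv_mul_eq_div]

lemma gaussianReal_Ioi_sub_div_le {ε δ c : ℝ} (hε0 : 0 < ε) (hε1 : ε ≤ 1) (hδ0 : 0 < δ)
    (hδ1 : δ < 1) (hc : c = √(2 * log (1.25 / δ))) :
    gaussianReal 0 1 (Ioi (c - ε / (2 * c))) ≤ ENNReal.ofReal δ := by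
  have hlog : 1 / 5 < log (1.25 / δ) := by
    have := one_sub_inv_le_log_of_pos (by positivity : 0 < 1.25 / δ)
    rw [inv_div] at this
    linarith [(div_lt_div_iff_of_pos_right (by norm_num : (0 : ℝ) < 1.25)).mpr hδ1]
  have hc0 : 0 < c := hc ▸ sqrt_pos.mpr (by linarith)
  have hc2 : c ^ 2 = 2 * log (1.25 / δ) := by rw [hc, sq_sqrt (by linarith)]
  have hδ : δ = 1.25 * exp (-(c ^ 2 / 2)) := by
    rw [hc2, mul_div_cancel_left₀ _ two_ne_zero, exp_neg, exp_log (by positivity)]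
    field_simp
  rcases le_or_gt 0 (c - ε / (2 * c)) with hu | hu
  · refine (gaussianReal_Ioi_le_exp one_ne_zero hu).trans (ENNReal.ofReal_le_ofReal ?_)
    have hsq : (c - ε / (2 * c)) ^ 2 = c ^ 2 - ε + (ε / (2 * c)) ^ 2 := by
      field_simp; ring
    have hexp : exp (ε / 2) ≤ 2 :=
      (exp_bound_div_one_sub_of_interval (by positivity) (by linarith)).trans
        (by rw [div_le_iff₀ (by linarith)]; linarith)
    calc exp (-(c - ε / (2 * c)) ^ 2 / (2 * ((1 : ℝ≥0) : ℝ))) / 2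
        ≤ exp (ε / 2 + -(c ^ 2 / 2)) / 2 := by
          gcongr; rw [hsq, NNReal.coe_one]; nlinarith [sq_nonneg (ε / (2 * c))]
      _ = exp (ε / 2) * (δ / 1.25) / 2 := by rw [exp_add, hδ]; ring
      _ ≤ 2 * (δ / 1.25) / 2 := by gcongr
      _ ≤ δ := by norm_num; linarith
  -- A negative threshold forces `c² < 1/2`, i.e. `δ` close to `1`, where a crude bound suffices.
  · refine (gaussianReal_Ioi_le_of_nonpos one_ne_zero hu.le).trans (ENNReal.ofReal_le_ofReal ?_)
    have hsqrt : 1 ≤ √(2 * π * ((1 : ℝ≥0) : ℝ)) :=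
      one_le_sqrt.mpr (by rw [NNReal.coe_one]; linarith [pi_gt_three])
    have hε2c : ε / (2 * c) ≤ 4 / 5 := by
      rw [div_le_iff₀ (by positivity)]; nlinarith
    have hc2ε : c ^ 2 < ε / 2 := by
      rw [sub_neg, lt_div_iff₀ (by positivity)] at hu; nlinarith
    have hδ' : 1.25 * (1 - c ^ 2 / 2) ≤ δ := by
      rw [hδ]; have := add_one_le_exp (-(c ^ 2 / 2)); linarith
    have := div_le_self (neg_nonneg.mpr hu.le) hsqrt
    nlinarith

end ProbabilityTheory

lemma sq_sub_sq_le_of_div_le {μ₁ μ₂ σ ε c x : ℝ} (hc : 0 < c) (hσ : 0 < σ) (hμ : μ₂ ≤ μ₁)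
    (hcμ : c * (μ₁ - μ₂) ≤ σ * ε) (hx : (x - μ₁) / σ ≤ c - ε / (2 * c)) :
    (x - μ₂) ^ 2 - (x - μ₁) ^ 2 ≤ 2 * σ ^ 2 * ε := by
  have hsplit : (x - μ₂) ^ 2 - (x - μ₁) ^ 2
      = 2 * (μ₁ - μ₂) * σ * ((x - μ₁) / σ) + (μ₁ - μ₂) ^ 2 := by
    field_simp; ring
  have hfactor : 2 * (μ₁ - μ₂) * σ * (c - ε / (2 * c)) + (μ₁ - μ₂) ^ 2 - 2 * σ ^ 2 * ε
      = (c * (μ₁ - μ₂) - σ * ε) * (μ₁ - μ₂ + 2 * σ * c) / c := by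
    field_simp; ring
  have hneg : (c * (μ₁ - μ₂) - σ * ε) * (μ₁ - μ₂ + 2 * σ * c) / c ≤ 0 :=
    div_nonpos_of_nonpos_of_nonneg
      (mul_nonpos_of_nonpos_of_nonneg (by linarith) (by nlinarith)) hc.le
  have hmono := mul_le_mul_of_nonneg_left hx (by nlinarith : 0 ≤ 2 * (μ₁ - μ₂) * σ)
  linarith

theorem gaussian_mechanism_dp_general
    (ε δ Δ σ : ℝ) (hε0 : 0 < ε) (hε1 : ε ≤ 1) (hδ0 : 0 < δ) (hδ1 : δ < 1) (hΔ : 0 < Δ)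
    (hσ : Real.sqrt (2 * Real.log (1.25 / δ)) * Δ / ε ≤ σ)
    (μ₁ μ₂ : ℝ) (hμ : |μ₁ - μ₂| ≤ Δ) (S : Set ℝ) :
    gaussianReal μ₁ ⟨σ ^ 2, sq_nonneg σ⟩ S ≤
      ENNReal.ofReal (Real.exp ε) * gaussianReal μ₂ ⟨σ ^ 2, sq_nonneg σ⟩ S
      + ENNReal.ofReal δ := by
  set v : ℝ≥0 := ⟨σ ^ 2, sq_nonneg σ⟩
  wlog hle : μ₂ ≤ μ₁ generalizing μ₁ μ₂ S with H
  · have h := H (-μ₁) (-μ₂) (by rwa [← neg_sub', abs_neg]) (-S) (by linarith)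
    rwa [gaussianReal_neg_apply, gaussianReal_neg_apply] at h
  set c := √(2 * log (1.25 / δ)) with hc
  have hc0 : 0 < c := sqrt_pos.mpr (mul_pos two_pos (log_pos (by rw [lt_div_iff₀ hδ0]; linarith)))
  have hσ0 : 0 < σ := (by positivity : 0 < c * Δ / ε).trans_le hσ
  have hv : v ≠ 0 := by rw [← NNReal.coe_ne_zero]; exact (pow_pos hσ0 2).ne'
  have hcμ : c * (μ₁ - μ₂) ≤ σ * ε := by
    rw [div_le_iff₀ hε0] at hσ
    nlinarith [abs_of_nonneg (sub_nonneg.mpr hle)]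
  calc gaussianReal μ₁ v S
      ≤ ENNReal.ofReal (exp ε) * gaussianReal μ₂ v S
        + gaussianReal μ₁ v ((fun x => (x - μ₁) / σ) ⁻¹' Ioi (c - ε / (2 * c))) :=
        gaussianReal_le_exp_mul_add hv (measurableSet_Ioi.preimage (by fun_prop))
          (fun x hx => by exact sq_sub_sq_le_of_div_le hc0 hσ0 hle hcμ (le_of_not_gt hx)) S
    _ ≤ _ := by
        rw [← Measure.map_apply (by fun_prop) measurableSet_Ioi,
          gaussianReal_map_sub_div hσ0.ne' rfl]
        gcongr
        exact gaussianReal_Ioi_sub_div_le hε0 hε1 hδ0 hδ1 hc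

/-- The `(ε, δ)`-DP guarantee of the Gaussian mechanism (Section 3): if
`σ ≥ √(2 ln(1.25/δ)) · Δ / ε` with `0 < ε ≤ 1`, then for means within `Δ`,
`N(μ₁, σ²)(S) ≤ e^ε · N(μ₂, σ²)(S) + δ` for every measurable `S`. -/
theorem gaussian_mechanism_dp
    (ε δ Δ σ : ℝ) (hε0 : 0 < ε) (hε1 : ε ≤ 1) (hδ0 : 0 < δ) (hδ1 : δ < 1) (hΔ : 0 < Δ)
    (hσ : Real.sqrt (2 * Real.log (1.25 / δ)) * Δ / ε ≤ σ)
    (μ₁ μ₂ : ℝ) (hμ : |μ₁ - μ₂| ≤ Δ) (S : Set ℝ) (hS : MeasurableSet S) :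
    gaussianReal μ₁ ⟨σ ^ 2, sq_nonneg σ⟩ S ≤
      ENNReal.ofReal (Real.exp ε) * gaussianReal μ₂ ⟨σ ^ 2, sq_nonneg σ⟩ S
      + ENNReal.ofReal δ :=
  gaussian_mechanism_dp_general ε δ Δ σ hε0 hε1 hδ0 hδ1 hΔ hσ μ₁ μ₂ hμ S
end

section
/- Let M ≥ 1, Δ > 0, ε > 0, and let s, s' : {1,…,M} → ℝ satisfy |s_m − s'_m| ≤ Δ for all m. Define probability vectors p and p' on {1,…,M} by p_m = exp((ε/(2Δ))·s_m) / Σ_{m'} exp((ε/(2Δ))·s_{m'}) and p'_m = exp((ε/(2Δ))·s'_m) / Σ_{m'} exp((ε/(2Δ))·s'_{m'}). Then for every real α > 1: (1/(α−1)) · log( Σ_{m=1}^M p_m^α · (p'_m)^{1−α} ) ≤ α·ε²/8. -/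
/-!
With `a = c • s`, `b = c • s'` (`c = ε/(2Δ)`) and `y = a - b`, the Rényi sum equals
`K α - α K 1 + (α - 1) K 0` for the log-partition function `K β = log ∑ exp (b + β y)` of the
exponential family interpolating between `p' = softmax b` (`β = 0`) and `p = softmax a` (`β = 1`).
Since `K''` is a variance of `y`, it is at most `max y² ≤ ε²/4`; so `ε²/8 β² - K` is convex, and
comparing its slopes on `[0, 1]` and `[1, α]` bounds the sum by `ε²/8 · α (α - 1)`.
-/

open Real Finset

section ExpMoment

variable {ι : Type*} [Fintype ι]

/-- `expMoment b y 0` is the partition function of the family `exp (b + β y)`, and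
`expMoment b y n / expMoment b y 0` the `n`-th moment of `y` under it. -/
noncomputable def expMoment (b y : ι → ℝ) (n : ℕ) (β : ℝ) : ℝ :=
  ∑ i, y i ^ n * exp (b i + β * y i)

variable (b y : ι → ℝ)

lemma hasDerivAt_expMoment (n : ℕ) (β : ℝ) :
    HasDerivAt (expMoment b y n) (expMoment b y (n + 1) β) β :=
  HasDerivAt.fun_sum fun i _ =>
    ((((hasDerivAt_id β).mul_const (y i)).const_add (b i)).exp.const_mul (y i ^ n)).congr_deriv
      (by simp only [id, one_mul]; ring)

lemma expMoment_zero_pos [Nonempty ι] (β : ℝ) : 0 < expMoment b y 0 β :=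
  sum_pos (fun _ _ => by positivity) univ_nonempty

lemma expMoment_two_le {L : ℝ} (hy : ∀ i, y i ^ 2 ≤ L) (β : ℝ) :
    expMoment b y 2 β ≤ L * expMoment b y 0 β := by
  simp only [expMoment, pow_zero, one_mul, mul_sum]
  exact sum_le_sum fun i _ => mul_le_mul_of_nonneg_right (hy i) (exp_pos _).le

lemma convexOn_sq_sub_log_expMoment [Nonempty ι] {L : ℝ} (hy : ∀ i, y i ^ 2 ≤ L) :
    ConvexOn ℝ Set.univ fun β => L / 2 * β ^ 2 - log (expMoment b y 0 β) := by
  set Z := expMoment b y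
  have hZ : ∀ β, Z 0 β ≠ 0 := fun β => (expMoment_zero_pos b y β).ne'
  have hd1 : ∀ β, HasDerivAt (fun β => L / 2 * β ^ 2 - log (Z 0 β))
      (L * β - Z 1 β / Z 0 β) β := fun β =>
    (((hasDerivAt_pow 2 β).const_mul (L / 2)).sub
      ((hasDerivAt_expMoment b y 0 β).log (hZ β))).congr_deriv (by simp only [zero_add]; ring)
  have hd2 : ∀ β, HasDerivAt (fun β => L * β - Z 1 β / Z 0 β)
      (L - (Z 2 β * Z 0 β - Z 1 β * Z 1 β) / Z 0 β ^ 2) β := fun β =>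
    (((hasDerivAt_id β).const_mul L).sub
      ((hasDerivAt_expMoment b y 1 β).div (hasDerivAt_expMoment b y 0 β) (hZ β))).congr_deriv
      (by simp only [mul_one]; rfl)
  refine convexOn_of_hasDerivWithinAt2_nonneg convex_univ
    (fun β _ => (hd1 β).continuousAt.continuousWithinAt)
    (fun β _ => (hd1 β).hasDerivWithinAt) (fun β _ => (hd2 β).hasDerivWithinAt) fun β _ => ?_
  have hZpos := expMoment_zero_pos b y β
  rw [sub_nonneg, div_le_iff₀ (by positivity)]
  nlinarith [expMoment_two_le b y hy β, sq_nonneg (Z 1 β)]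

lemma expMoment_zero_sub (a : ι → ℝ) (β : ℝ) :
    expMoment b (a - b) 0 β = ∑ i, exp (β * a i + (1 - β) * b i) := by
  refine sum_congr rfl fun i _ => ?_
  rw [pow_zero, one_mul, Pi.sub_apply]
  ring_nf

lemma log_sum_softmax_rpow_mul_softmax_rpow [Nonempty ι] (a : ι → ℝ) (α : ℝ) :
    log (∑ i, (exp (a i) / ∑ j, exp (a j)) ^ α * (exp (b i) / ∑ j, exp (b j)) ^ (1 - α)) =
      log (expMoment b (a - b) 0 α) - α * log (expMoment b (a - b) 0 1) +
        (α - 1) * log (expMoment b (a - b) 0 0) := by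
  have hA := expMoment_zero_pos b (a - b) 1
  have hB := expMoment_zero_pos b (a - b) 0
  have hZ := expMoment_zero_pos b (a - b) α
  simp only [expMoment_zero_sub, one_mul, sub_self, zero_mul, add_zero, zero_add, sub_zero]
    at hA hB hZ ⊢
  have hsum : ∑ i, (exp (a i) / ∑ j, exp (a j)) ^ α * (exp (b i) / ∑ j, exp (b j)) ^ (1 - α) =
      (∑ i, exp (α * a i + (1 - α) * b i)) /
        ((∑ j, exp (a j)) ^ α * (∑ j, exp (b j)) ^ (1 - α)) := by
    rw [sum_div]
    refine sum_congr rfl fun i _ => ?_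
    rw [div_rpow (exp_pos _).le hA.le, div_rpow (exp_pos _).le hB.le, ← exp_mul, ← exp_mul,
      div_mul_div_comm, ← exp_add, mul_comm (a i), mul_comm (b i)]
  rw [hsum, log_div hZ.ne' (by positivity), log_mul (by positivity) (by positivity),
    log_rpow hA, log_rpow hB]
  ring

end ExpMoment

lemma sub_mul_add_mul_le_of_convexOn_sq_sub {f : ℝ → ℝ} {L α : ℝ}
    (hf : ConvexOn ℝ Set.univ fun β => L / 2 * β ^ 2 - f β) (hα : 1 < α) :
    f α - α * f 1 + (α - 1) * f 0 ≤ L * α * (α - 1) / 2 := by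
  have hslope := hf.slope_mono_adjacent (Set.mem_univ 0) (Set.mem_univ α) one_pos hα
  rw [div_le_div_iff₀ (by norm_num) (by linarith)] at hslope
  nlinarith

theorem exponential_mechanism_zCDP_general
    (M : ℕ) (hM : 1 ≤ M) (Δ ε : ℝ) (hΔ : 0 < Δ)
    (s s' : Fin M → ℝ) (hs : ∀ m, |s m - s' m| ≤ Δ) (α : ℝ) (hα : 1 < α) :
    (1 / (α - 1)) * Real.log (∑ m : Fin M,
        (Real.exp (ε / (2 * Δ) * s m) / ∑ m' : Fin M, Real.exp (ε / (2 * Δ) * s m')) ^ α *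
        (Real.exp (ε / (2 * Δ) * s' m) / ∑ m' : Fin M, Real.exp (ε / (2 * Δ) * s' m')) ^ (1 - α))
      ≤ α * ε ^ 2 / 8 := by
  have : Nonempty (Fin M) := ⟨⟨0, hM⟩⟩
  set c := ε / (2 * Δ)
  have hy : ∀ m, ((fun m => c * s m) - fun m => c * s' m) m ^ 2 ≤ ε ^ 2 / 4 := fun m =>
    calc _ = c ^ 2 * (s m - s' m) ^ 2 := by rw [Pi.sub_apply]; ring
      _ ≤ c ^ 2 * Δ ^ 2 := by
        gcongr c ^ 2 * ?_
        exact sq_le_sq' (abs_le.mp (hs m)).1 (abs_le.mp (hs m)).2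
      _ = ε ^ 2 / 4 := by simp only [c]; field_simp; ring
  rw [log_sum_softmax_rpow_mul_softmax_rpow (fun m => c * s' m) (fun m => c * s m)]
  have hK := sub_mul_add_mul_le_of_convexOn_sq_sub
    (convexOn_sq_sub_log_expMoment (fun m => c * s' m) _ hy) hα
  rw [one_div_mul_eq_div, div_le_iff₀ (by linarith)]
  linarith

/-- zCDP guarantee of the exponential mechanism (Appendix B.3): if the scores `s, s'` on `M`
candidates differ by at most `Δ` pointwise, then the Rényi divergence of order `α` between the
exponential-mechanism distributions `p_m ∝ exp((ε/(2Δ))·s_m)` and `p'_m ∝ exp((ε/(2Δ))·s'_m)`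
is at most `α·ε²/8`, for every `α > 1`. -/
theorem exponential_mechanism_zCDP
    (M : ℕ) (hM : 1 ≤ M) (Δ ε : ℝ) (hΔ : 0 < Δ) (hε : 0 < ε)
    (s s' : Fin M → ℝ) (hs : ∀ m, |s m - s' m| ≤ Δ) (α : ℝ) (hα : 1 < α) :
    (1 / (α - 1)) * Real.log (∑ m : Fin M,
        (Real.exp (ε / (2 * Δ) * s m) / ∑ m' : Fin M, Real.exp (ε / (2 * Δ) * s m')) ^ α *
        (Real.exp (ε / (2 * Δ) * s' m) / ∑ m' : Fin M, Real.exp (ε / (2 * Δ) * s' m')) ^ (1 - α))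
      ≤ α * ε ^ 2 / 8 :=
  exponential_mechanism_zCDP_general M hM Δ ε hΔ s s' hs α hα
end
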